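/- arXiv:0806.3222 — 7 statements merged into one kernel-verified Lean document; each statement's English description precedes it below -/
import Mathlib

section
/- Let $1 \le q \le 2$ and let $(\phi_i)_{i\in\mathbb{N}}$ be an orthonormal basis (or frame) of a Hilbert space $U$, $w_i \ge w_{\min} > 0$, and $\mathcal{R}_q(u) = \sum_i w_i|\langle\phi_i,u\rangle|^q$. If $(u_k)$ converges weakly to $u$ in $U$ and $\mathcal{R}_q(u_k) \to \mathcal{R}_q(u) < \infty$, then $\mathcal{R}_q(u_k - u) \to 0$. -/
/-!
Weak convergence makes every coefficient `⟪φᵢ, uₖ⟫` converge to `⟪φᵢ, u⟫`, and `𝓡_q` is the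
`q`-th power of an `Lᵠ` norm for a weighted counting measure, so this is the `Lᵠ` Radon–Riesz
property. From `|s - t|^q ≤ C (|s|^q + |t|^q)`, the functions `C (|fₖ|^q + |f|^q) - |fₖ - f|^q`
are nonnegative and tend pointwise to `2C |f|^q`; Fatou's lemma and `∫ |fₖ|^q → ∫ |f|^q < ∞`
then leave no room for `limsup ∫ |fₖ - f|^q` to be positive.
-/

open scoped InnerProductSpace ENNReal Topology

open Filter MeasureTheory

theorem ENNReal.tendsto_nhds_zero_of_tendsto_add_of_le_liminf {ι : Type*} {l : Filter ι}
    {x y : ι → ℝ≥0∞} {L : ℝ≥0∞} (hL : L ≠ ∞)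
    (hsum : Tendsto (fun n => x n + y n) l (𝓝 L)) (hx : L ≤ liminf x l) :
    Tendsto y l (𝓝 0) := by
  rcases l.eq_or_neBot with rfl | _
  · exact tendsto_bot
  have hx_lim : Tendsto x l (𝓝 L) :=
    tendsto_of_le_liminf_of_limsup_le hx
      (hsum.limsup_eq ▸ limsup_le_limsup (.of_forall fun n => le_self_add))
  have hy : ∀ᶠ n in l, (x n + y n) - x n = y n := by
    filter_upwards [hsum.eventually_lt_const hL.lt_top] with n hn
    exact ENNReal.add_sub_cancel_left (ne_top_of_le_ne_top hn.ne le_self_add)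
  simpa using (ENNReal.Tendsto.sub hsum hx_lim (Or.inl hL)).congr' hy

theorem enorm_sub_rpow_le {E : Type*} [SeminormedAddCommGroup E] {q : ℝ} (hq : 0 ≤ q) (s t : E) :
    ‖s - t‖ₑ ^ q ≤ ENNReal.LpAddConst (ENNReal.ofReal q)⁻¹ * (‖s‖ₑ ^ q + ‖t‖ₑ ^ q) :=
  (ENNReal.rpow_le_rpow enorm_sub_le hq).trans (ENNReal.rpow_add_le_mul_rpow_add_rpow' _ _ hq)

theorem ENNReal.ofReal_mul_abs_rpow (w s : ℝ) {q : ℝ} (hq : 0 ≤ q) :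
    ENNReal.ofReal (w * |s| ^ q) = ENNReal.ofReal w * ‖s‖ₑ ^ q := by
  rw [ENNReal.ofReal_mul' (by positivity), ← ENNReal.ofReal_rpow_of_nonneg (abs_nonneg s) hq,
    Real.enorm_eq_ofReal_abs]

namespace MeasureTheory

variable {α : Type*} [MeasurableSpace α] {μ : Measure α}

theorem tendsto_lintegral_zero_of_le_of_tendsto_lintegral
    {F G : ℕ → α → ℝ≥0∞} {g : α → ℝ≥0∞}
    (hF_meas : ∀ n, AEMeasurable (F n) μ) (hG_meas : ∀ n, AEMeasurable (G n) μ)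
    (h_le : ∀ n, F n ≤ G n) (hF_lim : ∀ᵐ a ∂μ, Tendsto (fun n => F n a) atTop (𝓝 0))
    (hG_lim : ∀ᵐ a ∂μ, Tendsto (fun n => G n a) atTop (𝓝 (g a)))
    (hG_int : Tendsto (fun n => ∫⁻ a, G n a ∂μ) atTop (𝓝 (∫⁻ a, g a ∂μ)))
    (hg_fin : ∫⁻ a, g a ∂μ ≠ ∞) :
    Tendsto (fun n => ∫⁻ a, F n a ∂μ) atTop (𝓝 0) := by
  have h_split : ∀ n, ∫⁻ a, (G n - F n) a ∂μ + ∫⁻ a, F n a ∂μ = ∫⁻ a, G n a ∂μ := fun n => by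
    rw [← lintegral_add_right' _ (hF_meas n)]
    exact lintegral_congr fun a => tsub_add_cancel_of_le (h_le n a)
  have h_fatou : ∫⁻ a, g a ∂μ ≤ liminf (fun n => ∫⁻ a, (G n - F n) a ∂μ) atTop := by
    refine le_of_eq_of_le (lintegral_congr_ae ?_)
      (lintegral_liminf_le' fun n => (hG_meas n).sub (hF_meas n))
    filter_upwards [hF_lim, hG_lim] with a hFa hGa
    simpa using ((ENNReal.Tendsto.sub hGa hFa (Or.inr ENNReal.zero_ne_top)).liminf_eq).symm
  exact ENNReal.tendsto_nhds_zero_of_tendsto_add_of_le_liminf hg_fin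
    (by simpa only [h_split] using hG_int) h_fatou

theorem tendsto_lintegral_enorm_sub_rpow_of_tendsto_lintegral_enorm_rpow
    {E : Type*} [NormedAddCommGroup E] {f : ℕ → α → E} {f₀ : α → E} {q : ℝ} (hq : 0 < q)
    (hf_meas : ∀ n, AEStronglyMeasurable (f n) μ) (hf₀_meas : AEStronglyMeasurable f₀ μ)
    (h_lim : ∀ᵐ a ∂μ, Tendsto (fun n => f n a) atTop (𝓝 (f₀ a)))
    (h_int : Tendsto (fun n => ∫⁻ a, ‖f n a‖ₑ ^ q ∂μ) atTop (𝓝 (∫⁻ a, ‖f₀ a‖ₑ ^ q ∂μ)))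
    (h_fin : ∫⁻ a, ‖f₀ a‖ₑ ^ q ∂μ ≠ ∞) :
    Tendsto (fun n => ∫⁻ a, ‖f n a - f₀ a‖ₑ ^ q ∂μ) atTop (𝓝 0) := by
  obtain ⟨C, hC, h_le⟩ : ∃ C ≠ ∞, ∀ s t : E, ‖s - t‖ₑ ^ q ≤ C * (‖s‖ₑ ^ q + ‖t‖ₑ ^ q) :=
    ⟨_, (ENNReal.LpAddConst_lt_top _).ne, enorm_sub_rpow_le hq.le⟩
  have h_rpow : Continuous fun e : ℝ≥0∞ => e ^ q := ENNReal.continuous_rpow_const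
  have h_int_bound : ∀ h : α → E, AEStronglyMeasurable h μ →
      ∫⁻ a, C * (‖h a‖ₑ ^ q + ‖f₀ a‖ₑ ^ q) ∂μ
        = C * (∫⁻ a, ‖h a‖ₑ ^ q ∂μ + ∫⁻ a, ‖f₀ a‖ₑ ^ q ∂μ) := fun h hh => by
    rw [lintegral_const_mul' _ _ hC, lintegral_add_right' _ (by fun_prop)]
  refine tendsto_lintegral_zero_of_le_of_tendsto_lintegral
    (g := fun a => C * (‖f₀ a‖ₑ ^ q + ‖f₀ a‖ₑ ^ q)) (fun n => by fun_prop) (fun n => by fun_prop)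
    (fun n a => h_le _ _) ?_ ?_ ?_ ?_
  · filter_upwards [h_lim] with a ha
    have := (h_rpow.tendsto 0).comp (tendsto_iff_edist_tendsto_0.mp ha)
    simpa [Function.comp_def, edist_eq_enorm_sub, ENNReal.zero_rpow_of_pos hq] using this
  · filter_upwards [h_lim] with a ha
    exact ENNReal.Tendsto.const_mul
      ((((h_rpow.comp continuous_enorm).tendsto _).comp ha).add_const _) (Or.inr hC)
  · rw [h_int_bound _ hf₀_meas, tendsto_congr fun n => h_int_bound _ (hf_meas n)]
    exact ENNReal.Tendsto.const_mul (h_int.add_const _) (Or.inr hC)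
  · rw [h_int_bound _ hf₀_meas]
    exact ENNReal.mul_ne_top hC (ENNReal.add_ne_top.mpr ⟨h_fin, h_fin⟩)

end MeasureTheory

theorem Rq_radon_riesz_general
    {U : Type*} [NormedAddCommGroup U] [InnerProductSpace ℝ U]
    (b : HilbertBasis ℕ ℝ U)
    (q : ℝ) (hq1 : 1 ≤ q)
    (w : ℕ → ℝ)
    (R : U → ℝ≥0∞) (hR : ∀ v : U, R v = ∑' i, ENNReal.ofReal (w i * |⟪b i, v⟫_ℝ| ^ q))
    (u : ℕ → U) (x : U)
    (hweak : ∀ v : U, Filter.Tendsto (fun k => ⟪v, u k⟫_ℝ) Filter.atTop (𝓝 ⟪v, x⟫_ℝ))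
    (hfin : R x < ⊤)
    (hconv : Filter.Tendsto (fun k => R (u k)) Filter.atTop (𝓝 (R x))) :
    Filter.Tendsto (fun k => R (u k - x)) Filter.atTop (𝓝 0) := by
  have hq : 0 < q := by linarith
  set ν : Measure ℕ := Measure.count.withDensity fun i => ENNReal.ofReal (w i)
  have hR_lintegral : ∀ v, R v = ∫⁻ i, ‖⟪b i, v⟫_ℝ‖ₑ ^ q ∂ν := fun v => by
    rw [hR, lintegral_withDensity_eq_lintegral_mul _ (measurable_of_countable _)
      (measurable_of_countable _), lintegral_count]
    exact tsum_congr fun i => ENNReal.ofReal_mul_abs_rpow _ _ hq.le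
  simp only [hR_lintegral, inner_sub_right] at hfin hconv ⊢
  exact tendsto_lintegral_enorm_sub_rpow_of_tendsto_lintegral_enorm_rpow hq
    (fun _ => .of_discrete) .of_discrete (.of_forall fun i => hweak (b i)) hconv hfin.ne

theorem Rq_radon_riesz
    {U : Type*} [NormedAddCommGroup U] [InnerProductSpace ℝ U] [CompleteSpace U]
    (b : HilbertBasis ℕ ℝ U)
    (q : ℝ) (hq1 : 1 ≤ q) (hq2 : q ≤ 2)
    (w : ℕ → ℝ) (wmin : ℝ) (hwmin : 0 < wmin) (hw : ∀ i, wmin ≤ w i)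
    (R : U → ℝ≥0∞) (hR : ∀ v : U, R v = ∑' i, ENNReal.ofReal (w i * |⟪b i, v⟫_ℝ| ^ q))
    (u : ℕ → U) (x : U)
    (hweak : ∀ v : U, Filter.Tendsto (fun k => ⟪v, u k⟫_ℝ) Filter.atTop (𝓝 ⟪v, x⟫_ℝ))
    (hfin : R x < ⊤)
    (hconv : Filter.Tendsto (fun k => R (u k)) Filter.atTop (𝓝 (R x))) :
    Filter.Tendsto (fun k => R (u k - x)) Filter.atTop (𝓝 0) :=
  Rq_radon_riesz_general b q hq1 w R hR u x hweak hfin hconv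
end

section
/- For every $1 < q \le 2$ there exists a constant $d_q > 0$ such that for all real numbers $a, b$: $d_q |a-b|^2 \le (|a|^{2-q} + |a-b|^{2-q})\left[|b|^q - |a|^q - q|a|^{q-1}\operatorname{sgn}(a)(b-a)\right]$. -/
private lemma rpow_subadd {p : ℝ} (hp0 : 0 ≤ p) (hp1 : p ≤ 1) {x y : ℝ} (hx : 0 ≤ x)
    (hy : 0 ≤ y) : (x + y) ^ p ≤ x ^ p + y ^ p := by
  have h := NNReal.coe_le_coe.2 (NNReal.rpow_add_le_add_rpow x.toNNReal y.toNNReal hp0 hp1)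
  push_cast at h
  rwa [Real.coe_toNNReal _ hx, Real.coe_toNNReal _ hy] at h

private lemma tangent_concave {p : ℝ} (hp0 : 0 < p) (hp1 : p ≤ 1) {x y : ℝ} (hx : 0 ≤ x)
    (hy : 0 < y) : x ^ p ≤ y ^ p + p * y ^ (p - 1) * (x - y) := by
  have hs : -1 ≤ x / y - 1 := by
    have : 0 ≤ x / y := div_nonneg hx hy.le
    linarith
  have h := rpow_one_add_le_one_add_mul_self hs hp0.le hp1
  rw [show 1 + (x / y - 1) = x / y by ring, Real.div_rpow hx hy.le] at h
  have hyp : 0 < y ^ p := Real.rpow_pos_of_pos hy _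
  have h2 : x ^ p ≤ y ^ p * (1 + p * (x / y - 1)) := by
    rw [div_le_iff₀ hyp] at h; linarith [h]
  have hyy : y ^ (p - 1) = y ^ p / y := by rw [Real.rpow_sub hy, Real.rpow_one]
  calc x ^ p ≤ y ^ p * (1 + p * (x / y - 1)) := h2
    _ = y ^ p + p * (y ^ p / y) * (x - y) := by field_simp
    _ = y ^ p + p * y ^ (p - 1) * (x - y) := by rw [hyy]

private lemma tangent_convex_pos {q : ℝ} (hq : 1 ≤ q) {x : ℝ} (hx : 0 < x) (y : ℝ) :
    x ^ q + q * x ^ (q - 1) * (y - x) ≤ |y| ^ q := by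
  have h1 : y - x ≤ |y| - x := by have := le_abs_self y; linarith
  have hc : 0 ≤ q * x ^ (q - 1) := mul_nonneg (by linarith) (Real.rpow_nonneg hx.le _)
  have step : x ^ q + q * x ^ (q - 1) * (y - x) ≤ x ^ q + q * x ^ (q - 1) * (|y| - x) := by
    nlinarith [mul_le_mul_of_nonneg_left h1 hc]
  refine step.trans ?_
  have hs : -1 ≤ |y| / x - 1 := by
    have : 0 ≤ |y| / x := div_nonneg (abs_nonneg y) hx.le
    linarith
  have h := one_add_mul_self_le_rpow_one_add hs hq
  rw [show 1 + (|y| / x - 1) = |y| / x by ring, Real.div_rpow (abs_nonneg y) hx.le] at h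
  have hxq : 0 < x ^ q := Real.rpow_pos_of_pos hx _
  have h2 : x ^ q * (1 + q * (|y| / x - 1)) ≤ |y| ^ q := by
    rw [le_div_iff₀ hxq] at h; linarith [h]
  have hxx : x ^ (q - 1) = x ^ q / x := by rw [Real.rpow_sub hx, Real.rpow_one]
  calc x ^ q + q * x ^ (q - 1) * (|y| - x)
      = x ^ q * (1 + q * (|y| / x - 1)) := by rw [hxx]; field_simp
    _ ≤ |y| ^ q := h2

private lemma tangent_convex {q : ℝ} (hq : 1 ≤ q) (x y : ℝ) :
    |x| ^ q + q * |x| ^ (q - 1) * Real.sign x * (y - x) ≤ |y| ^ q := by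
  rcases lt_trichotomy x 0 with hx | rfl | hx
  · have h := tangent_convex_pos hq (x := -x) (by linarith) (-y)
    rw [Real.sign_of_neg hx]
    have h2 : |x| ^ q + q * |x| ^ (q - 1) * (x - y) ≤ |y| ^ q := by
      rw [show |x| = -x from abs_of_neg hx, show x - y = -y - -x by ring,
        show |y| = |(-y)| from (abs_neg y).symm]
      exact h
    nlinarith [h2]
  · simp only [abs_zero, Real.sign_zero, mul_zero, zero_mul, sub_zero]
    rw [Real.zero_rpow (by linarith : q ≠ 0)]
    simp [Real.rpow_nonneg (abs_nonneg y)]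
  · have h := tangent_convex_pos hq hx y
    rw [show |x| = x from abs_of_pos hx, Real.sign_of_pos hx]
    nlinarith [h]

private lemma gap_nonneg {p : ℝ} (hp0 : 0 < p) (hp1 : p ≤ 1) {x y : ℝ} (hx : 0 ≤ x)
    (hxy : x ≤ y) :
    p * (y - x) ^ 2 * (|x| + |y|) ^ (p - 1) ≤
      (|y| ^ p * Real.sign y - |x| ^ p * Real.sign x) * (y - x) := by
  rcases eq_or_lt_of_le hxy with rfl | hlt
  · simp
  have hy : 0 < y := hx.trans_lt hlt
  have hax : |x| = x := abs_of_nonneg hx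
  have hay : |y| = y := abs_of_nonneg hy.le
  have hgx : |x| ^ p * Real.sign x = x ^ p := by
    rcases eq_or_lt_of_le hx with rfl | hx'
    · simp [Real.sign_zero, Real.zero_rpow hp0.ne']
    · rw [hax, Real.sign_of_pos hx', mul_one]
  rw [hay, Real.sign_of_pos hy, mul_one, hgx, hax]
  have t := tangent_concave hp0 hp1 hx hy
  have hmono : (x + y) ^ (p - 1) ≤ y ^ (p - 1) :=
    Real.rpow_le_rpow_of_nonpos hy (by linarith) (by linarith)
  have h1 : p * (y - x) ^ 2 * (x + y) ^ (p - 1) ≤ p * (y - x) ^ 2 * y ^ (p - 1) :=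
    mul_le_mul_of_nonneg_left hmono (by positivity)
  have h3 : p * y ^ (p - 1) * (y - x) ≤ y ^ p - x ^ p := by linarith
  have h4 := mul_le_mul_of_nonneg_right h3 (by linarith : (0:ℝ) ≤ y - x)
  nlinarith [h1, h4]

private lemma gap_cross {p : ℝ} (hp0 : 0 < p) (hp1 : p ≤ 1) {x y : ℝ} (hx : x < 0)
    (hy : 0 ≤ y) :
    p * (y - x) ^ 2 * (|x| + |y|) ^ (p - 1) ≤
      (|y| ^ p * Real.sign y - |x| ^ p * Real.sign x) * (y - x) := by
  have hax : |x| = -x := abs_of_neg hx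
  have hay : |y| = y := abs_of_nonneg hy
  have hgy : |y| ^ p * Real.sign y = y ^ p := by
    rcases eq_or_lt_of_le hy with rfl | hy'
    · simp [Real.sign_zero, Real.zero_rpow hp0.ne']
    · rw [hay, Real.sign_of_pos hy', mul_one]
  rw [hgy, hax, hay, Real.sign_of_neg hx]
  have hs : 0 < -x + y := by linarith
  have hsub : (-x + y) ^ p ≤ (-x) ^ p + y ^ p := rpow_subadd hp0.le hp1 (by linarith) hy
  have hkey : p * (-x + y) ^ p ≤ (-x) ^ p + y ^ p := by
    have h0 : 0 ≤ (-x + y) ^ p := Real.rpow_nonneg hs.le _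
    nlinarith [hsub]
  have hrw : (-x + y) ^ (p - 1) = (-x + y) ^ p / (-x + y) := by
    rw [Real.rpow_sub hs, Real.rpow_one]
  have expand : p * (y - x) ^ 2 * (-x + y) ^ (p - 1) = p * (-x + y) ^ p * (y - x) := by
    rw [hrw]; field_simp; ring
  rw [expand]
  have := mul_le_mul_of_nonneg_right hkey (by linarith : (0:ℝ) ≤ y - x)
  nlinarith [this]

private lemma sgn_gap_le {p : ℝ} (hp0 : 0 < p) (hp1 : p ≤ 1) (x y : ℝ) (hxy : x ≤ y) :
    p * (y - x) ^ 2 * (|x| + |y|) ^ (p - 1) ≤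
      (|y| ^ p * Real.sign y - |x| ^ p * Real.sign x) * (y - x) := by
  rcases le_or_gt 0 x with hx | hx
  · exact gap_nonneg hp0 hp1 hx hxy
  rcases le_or_gt 0 y with hy | hy
  · exact gap_cross hp0 hp1 hx hy
  · have h := gap_nonneg hp0 hp1 (x := -y) (y := -x) (by linarith) (by linarith)
    rw [abs_neg, abs_neg, Real.sign_neg, Real.sign_neg, add_comm |y| |x|] at h
    nlinarith [h]

private lemma sgn_gap {p : ℝ} (hp0 : 0 < p) (hp1 : p ≤ 1) (x y : ℝ) :
    p * (y - x) ^ 2 * (|x| + |y|) ^ (p - 1) ≤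
      (|y| ^ p * Real.sign y - |x| ^ p * Real.sign x) * (y - x) := by
  rcases le_total x y with hxy | hxy
  · exact sgn_gap_le hp0 hp1 x y hxy
  · have h := sgn_gap_le hp0 hp1 y x hxy
    rw [add_comm |y| |x|] at h
    nlinarith [h]

private lemma bregman_lower {q : ℝ} (hq1 : 1 < q) (hq2 : q ≤ 2) (a b : ℝ) :
    q * (q - 1) / 8 * (b - a) ^ 2 * (|a| + |b - a|) ^ (q - 2) ≤
      |b| ^ q - |a| ^ q - q * |a| ^ (q - 1) * Real.sign a * (b - a) := by
  by_cases h0 : a = 0 ∧ b = 0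
  · obtain ⟨rfl, rfl⟩ := h0
    norm_num [Real.sign_zero, Real.zero_rpow (show q ≠ 0 by linarith)]
  have hpos : 0 < |a| + |b - a| := by
    rcases eq_or_ne a 0 with rfl | ha
    · have hb : b ≠ 0 := by tauto
      have h1 : 0 < |b - 0| := abs_pos.mpr (by simpa using hb)
      linarith [abs_nonneg (0:ℝ)]
    · have h1 : 0 < |a| := abs_pos.mpr ha
      linarith [abs_nonneg (b - a)]
  have hpos2 : 0 < |a| + |(a + b) / 2| := by
    rcases eq_or_ne a 0 with rfl | ha
    · have hb : b ≠ 0 := by tauto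
      have hm : (0 + b) / 2 ≠ 0 := by simpa using hb
      have h1 : 0 < |(0 + b) / 2| := abs_pos.mpr hm
      linarith [abs_nonneg (0:ℝ)]
    · have h1 : 0 < |a| := abs_pos.mpr ha
      linarith [abs_nonneg ((a + b) / 2)]
  have hp0 : 0 < q - 1 := by linarith
  have t1 := tangent_convex hq1.le ((a + b) / 2) b
  have t2 := tangent_convex hq1.le a ((a + b) / 2)
  have gap := sgn_gap hp0 (by linarith : q - 1 ≤ 1) a ((a + b) / 2)
  rw [show q - 1 - 1 = q - 2 by ring] at gap
  -- bound (|a| + |m|)^(q-2) from below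
  have hmle : |a| + |(a + b) / 2| ≤ 2 * (|a| + |b - a|) := by
    have h1 : |(a + b) / 2| ≤ |a| + |b - a| := by
      have : (a + b) / 2 = a + (b - a) / 2 := by ring
      rw [this]
      calc |a + (b - a) / 2| ≤ |a| + |(b - a) / 2| := abs_add_le _ _
        _ ≤ |a| + |b - a| := by
            rw [show (b - a) / 2 = (b - a) / 2 from rfl, abs_div, abs_two]
            have := div_le_self (abs_nonneg (b - a)) (by norm_num : (1:ℝ) ≤ 2)
            linarith
    linarith [abs_nonneg a, abs_nonneg (b - a)]
  have hmono : (2 * (|a| + |b - a|)) ^ (q - 2) ≤ (|a| + |(a + b) / 2|) ^ (q - 2) :=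
    Real.rpow_le_rpow_of_nonpos hpos2 hmle (by linarith)
  have h2q : (1 / 2 : ℝ) ≤ (2:ℝ) ^ (q - 2) := by
    have := Real.rpow_le_rpow_of_exponent_le (by norm_num : (1:ℝ) ≤ 2)
      (by linarith : (-1:ℝ) ≤ q - 2)
    rw [Real.rpow_neg_one] at this
    linarith [this]
  have hmulrw : (2 * (|a| + |b - a|)) ^ (q - 2)
      = (2:ℝ) ^ (q - 2) * (|a| + |b - a|) ^ (q - 2) :=
    Real.mul_rpow (by norm_num) (by positivity)
  have hbound : (1 / 2) * (|a| + |b - a|) ^ (q - 2) ≤ (|a| + |(a + b) / 2|) ^ (q - 2) := by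
    have hS : 0 ≤ (|a| + |b - a|) ^ (q - 2) := Real.rpow_nonneg hpos.le _
    nlinarith [hmono, hmulrw, mul_le_mul_of_nonneg_right h2q hS]
  -- combine
  have c1 : (q - 1) * ((a + b) / 2 - a) ^ 2 * ((1 / 2) * (|a| + |b - a|) ^ (q - 2)) ≤
      (q - 1) * ((a + b) / 2 - a) ^ 2 * (|a| + |(a + b) / 2|) ^ (q - 2) :=
    mul_le_mul_of_nonneg_left hbound (by positivity)
  have hq0 : (0:ℝ) ≤ q := by linarith
  have c1q := mul_le_mul_of_nonneg_left c1 hq0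
  have gapq := mul_le_mul_of_nonneg_left gap hq0
  nlinarith [t1, t2, c1q, gapq]

theorem scalar_bregman_estimate (q : ℝ) (hq1 : 1 < q) (hq2 : q ≤ 2) :
    ∃ d : ℝ, 0 < d ∧ ∀ a b : ℝ,
      d * |a - b| ^ 2 ≤ (|a| ^ (2 - q) + |a - b| ^ (2 - q)) *
        (|b| ^ q - |a| ^ q - q * |a| ^ (q - 1) * Real.sign a * (b - a)) := by
  refine ⟨q * (q - 1) / 8, by nlinarith, ?_⟩
  intro a b
  rw [abs_sub_comm a b]
  have hD := bregman_lower hq1 hq2 a b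
  have hDnn : 0 ≤ |b| ^ q - |a| ^ q - q * |a| ^ (q - 1) * Real.sign a * (b - a) := by
    refine le_trans ?_ hD
    have h1 : 0 ≤ (|a| + |b - a|) ^ (q - 2) := Real.rpow_nonneg (by positivity) _
    have h2 : 0 ≤ (b - a) ^ 2 * (|a| + |b - a|) ^ (q - 2) := mul_nonneg (sq_nonneg _) h1
    have h3 : 0 ≤ q * (q - 1) / 8 := by nlinarith
    linarith [mul_nonneg h3 h2]
  by_cases h0 : a = 0 ∧ b = 0
  · obtain ⟨rfl, rfl⟩ := h0
    norm_num [Real.sign_zero, Real.zero_rpow (show q ≠ 0 by linarith)]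
  have hpos : 0 < |a| + |b - a| := by
    rcases eq_or_ne a 0 with rfl | ha
    · have hb : b ≠ 0 := by tauto
      have h1 : 0 < |b - 0| := abs_pos.mpr (by simpa using hb)
      linarith [abs_nonneg (0:ℝ)]
    · have h1 : 0 < |a| := abs_pos.mpr ha
      linarith [abs_nonneg (b - a)]
  have hsub : (|a| + |b - a|) ^ (2 - q) ≤ |a| ^ (2 - q) + |b - a| ^ (2 - q) :=
    rpow_subadd (by linarith) (by linarith) (abs_nonneg a) (abs_nonneg (b - a))
  have step1 : (|a| + |b - a|) ^ (2 - q) *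
        (|b| ^ q - |a| ^ q - q * |a| ^ (q - 1) * Real.sign a * (b - a)) ≤
      (|a| ^ (2 - q) + |b - a| ^ (2 - q)) *
        (|b| ^ q - |a| ^ q - q * |a| ^ (q - 1) * Real.sign a * (b - a)) :=
    mul_le_mul_of_nonneg_right hsub hDnn
  have hW : 0 ≤ (|a| + |b - a|) ^ (2 - q) := Real.rpow_nonneg hpos.le _
  have step2 := mul_le_mul_of_nonneg_left hD hW
  have hcancel : (|a| + |b - a|) ^ (2 - q) * (|a| + |b - a|) ^ (q - 2) = 1 := by
    rw [← Real.rpow_add hpos]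
    norm_num
  have habs : |b - a| ^ 2 = (b - a) ^ 2 := sq_abs _
  have e : (|a| + |b - a|) ^ (2 - q) *
        (q * (q - 1) / 8 * (b - a) ^ 2 * (|a| + |b - a|) ^ (q - 2))
      = q * (q - 1) / 8 * (b - a) ^ 2 := by
    calc (|a| + |b - a|) ^ (2 - q) *
          (q * (q - 1) / 8 * (b - a) ^ 2 * (|a| + |b - a|) ^ (q - 2))
        = q * (q - 1) / 8 * (b - a) ^ 2 *
            ((|a| + |b - a|) ^ (2 - q) * (|a| + |b - a|) ^ (q - 2)) := by ring
      _ = q * (q - 1) / 8 * (b - a) ^ 2 := by rw [hcancel, mul_one]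
  rw [habs]
  linarith [step1, step2, e]
end

section
/- Let $1 < q \le 2$, let $(\phi_i)_{i\in\mathbb{N}}$ be an orthonormal basis of a Hilbert space $U$, $w_i \ge w_{\min} > 0$, and $\mathcal{R}_q(u) = \sum_i w_i|\langle\phi_i,u\rangle|^q$. Then there exists a constant $c_q > 0$ depending only on $q$ (and $w_{\min}$ as $c_q = d_q w_{\min}^2$) such that for all $u, \tilde u \in \operatorname{dom}(\mathcal{R}_q)$ with $\sum_i w_i^2 |\langle\phi_i,u\rangle|^{2(q-1)} < \infty$: $\mathcal{R}_q(\tilde u) - \mathcal{R}_q(u) - \langle \partial\mathcal{R}_q(u), \tilde u - u\rangle \ge \dfrac{c_q \|\tilde u - u\|^2}{3w_{\min} + 2\mathcal{R}_q(u) + \mathcal{R}_q(\tilde u)}$, where $\partial\mathcal{R}_q(u) = \sum_i q\, w_i |\langle\phi_i,u\rangle|^{q-1}\operatorname{sgn}(\langle\phi_i,u\rangle)\phi_i$. -/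
/-!
On `[-R, R]` the function `|t| ^ q` is strongly convex with modulus `q (q - 1) R ^ (q - 2)`: its
derivative `q |t| ^ (q - 1) sign t` minus `q (q - 1) R ^ (q - 2) t` is odd and monotone on `[0, R]`.
Taking `R = max 1 (max |a| |c|)`, so that `R ^ (2 - q) ≤ 1 + |a| ^ q + |c| ^ q`, gives a scalar
Bregman bound with denominator `1 + |a| ^ q + |c| ^ q`. Each such denominator, weighted by
`w_min ≤ w i`, is at most `3 w_min + 2 R_q(u) + R_q(ũ)`, and summing the coordinatewise bounds
by Parseval's identity gives the theorem with `c = q (q - 1) w_min ^ 2 / 2`.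
-/

open scoped InnerProductSpace
open Set

theorem abs_rpow_sub_one_mul_sign (q x : ℝ) :
    |x| ^ (q - 1) * Real.sign x = |x| ^ (q - 2) * x := by
  have hsplit : q - 1 = (q - 2) + 1 := by ring
  rcases lt_trichotomy x 0 with hx | rfl | hx
  · rw [Real.sign_of_neg hx, abs_of_neg hx, hsplit, Real.rpow_add_one (by linarith)]
    ring
  · simp
  · rw [Real.sign_of_pos hx, abs_of_pos hx, hsplit, Real.rpow_add_one hx.ne']
    ring

theorem hasDerivAt_abs_rpow_sign {q : ℝ} (hq : 1 < q) (x : ℝ) :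
    HasDerivAt (fun t => |t| ^ q) (q * |x| ^ (q - 1) * Real.sign x) x := by
  simpa only [mul_assoc, abs_rpow_sub_one_mul_sign] using hasDerivAt_abs_rpow x hq

theorem le_bregman_of_monotoneOn_deriv_sub_mul {f f' : ℝ → ℝ} {S : Set ℝ} {m a c : ℝ}
    (hS : Convex ℝ S) (hf : ∀ t, HasDerivAt f (f' t) t)
    (hmono : MonotoneOn (fun t => f' t - m * t) S) (ha : a ∈ S) (hc : c ∈ S) :
    m / 2 * (c - a) ^ 2 ≤ f c - f a - f' a * (c - a) := by
  set g : ℝ → ℝ := fun t => f t - m / 2 * t ^ 2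
  have hg : ∀ t, HasDerivAt g (f' t - m * t) t := fun t =>
    ((hf t).sub ((hasDerivAt_pow 2 t).const_mul (m / 2))).congr_deriv (by norm_num; ring)
  have hconv : ConvexOn ℝ S g :=
    MonotoneOn.convexOn_of_deriv hS (fun t _ => (hg t).continuousAt.continuousWithinAt)
      (fun t _ => (hg t).differentiableAt.differentiableWithinAt)
      (by rw [funext fun t => (hg t).deriv]; exact hmono.mono interior_subset)
  rcases lt_trichotomy a c with hac | rfl | hca
  · have h := hconv.le_slope_of_hasDerivAt ha hc hac (hg a)
    rw [slope_def_field, le_div_iff₀ (sub_pos.2 hac)] at h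
    linear_combination h
  · simp
  · have h := hconv.slope_le_of_hasDerivAt hc ha hca (hg a)
    rw [slope_def_field, div_le_iff₀ (sub_pos.2 hca)] at h
    linear_combination h

theorem monotoneOn_Icc_neg_of_odd {f : ℝ → ℝ} {R : ℝ} (hodd : ∀ t, f (-t) = -f t)
    (hf : MonotoneOn f (Icc 0 R)) : MonotoneOn f (Icc (-R) R) := by
  have hnonneg : ∀ ⦃x y⦄, x ∈ Icc (-R) R → y ∈ Icc (-R) R → 0 ≤ x → x ≤ y → f x ≤ f y :=
    fun x y hx hy h0x hxy => hf ⟨h0x, hx.2⟩ ⟨h0x.trans hxy, hy.2⟩ hxy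
  have hnonpos : ∀ ⦃x y⦄, x ∈ Icc (-R) R → y ∈ Icc (-R) R → y ≤ 0 → x ≤ y → f x ≤ f y := by
    intro x y hx hy hy0 hxy
    have := hf ⟨neg_nonneg.2 hy0, by linarith [hy.1]⟩ ⟨by linarith, by linarith [hx.1]⟩
      (neg_le_neg hxy)
    rw [hodd, hodd] at this
    linarith
  intro x hx y hy hxy
  rcases le_total 0 x with h0x | hx0
  · exact hnonneg hx hy h0x hxy
  rcases le_total y 0 with hy0 | h0y
  · exact hnonpos hx hy hy0 hxy
  have h0 : (0 : ℝ) ∈ Icc (-R) R := ⟨by linarith [hy.2], by linarith [hy.2]⟩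
  exact (hnonpos hx h0 le_rfl hx0).trans (hnonneg h0 hy le_rfl h0y)

section AbsRpow

variable {q : ℝ} (hq1 : 1 < q) (hq2 : q ≤ 2)
include hq1 hq2

theorem monotoneOn_rpow_sub_mul {R : ℝ} :
    MonotoneOn (fun t => q * t ^ (q - 1) - q * (q - 1) * R ^ (q - 2) * t) (Icc 0 R) := by
  refine monotoneOn_of_hasDerivWithinAt_nonneg
    (f' := fun t => q * ((q - 1) * t ^ (q - 2)) - q * (q - 1) * R ^ (q - 2)) (convex_Icc 0 R)
    (by fun_prop (disch := intros; linarith)) (fun t ht => ?_) (fun t ht => ?_)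
  · rw [interior_Icc] at ht
    have h := Real.hasDerivAt_rpow_const (x := t) (p := q - 1) (Or.inl ht.1.ne')
    rw [show q - 1 - 1 = q - 2 by ring] at h
    exact (((h.const_mul q).sub ((hasDerivAt_id' t).const_mul _)).congr_deriv
      (by rw [mul_one])).hasDerivWithinAt
  · rw [interior_Icc] at ht
    have : R ^ (q - 2) ≤ t ^ (q - 2) := Real.rpow_le_rpow_of_nonpos ht.1 ht.2.le (by linarith)
    have hq : 0 ≤ q * (q - 1) := by nlinarith
    nlinarith

theorem monotoneOn_abs_rpow_deriv_sub_mul {R : ℝ} :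
    MonotoneOn (fun t => q * |t| ^ (q - 1) * Real.sign t - q * (q - 1) * R ^ (q - 2) * t)
      (Icc (-R) R) := by
  refine monotoneOn_Icc_neg_of_odd (fun t => by simp only [abs_neg, Real.sign_neg]; ring) ?_
  intro x hx y hy hxy
  have hpos : ∀ t : ℝ, 0 ≤ t → |t| ^ (q - 1) * Real.sign t = t ^ (q - 1) := fun t ht => by
    rcases ht.eq_or_lt with rfl | ht
    · simp [Real.zero_rpow (by linarith : q - 1 ≠ 0)]
    · rw [abs_of_pos ht, Real.sign_of_pos ht, mul_one]
  simp only [mul_assoc q, hpos x hx.1, hpos y hy.1]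
  simpa only [mul_assoc q] using monotoneOn_rpow_sub_mul hq1 hq2 hx hy hxy

theorem le_abs_rpow_bregman_of_abs_le {R a c : ℝ} (ha : |a| ≤ R) (hc : |c| ≤ R) :
    q * (q - 1) * R ^ (q - 2) / 2 * (c - a) ^ 2
      ≤ |c| ^ q - |a| ^ q - q * |a| ^ (q - 1) * Real.sign a * (c - a) :=
  le_bregman_of_monotoneOn_deriv_sub_mul (convex_Icc (-R) R) (hasDerivAt_abs_rpow_sign hq1)
    (monotoneOn_abs_rpow_deriv_sub_mul hq1 hq2) (abs_le.1 ha) (abs_le.1 hc)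

theorem le_abs_rpow_bregman (a c : ℝ) :
    q * (q - 1) / 2 * (c - a) ^ 2 / (1 + |a| ^ q + |c| ^ q)
      ≤ |c| ^ q - |a| ^ q - q * |a| ^ (q - 1) * Real.sign a * (c - a) := by
  set R := max 1 (max |a| |c|)
  have hR : 1 ≤ R := le_max_left _ _
  have hRq : R ^ q ≤ 1 + |a| ^ q + |c| ^ q := by
    have := Real.rpow_nonneg (abs_nonneg a) q
    have := Real.rpow_nonneg (abs_nonneg c) q
    rcases max_choice 1 (max |a| |c|) with h | h <;> simp only [R, h]
    · rw [Real.one_rpow]; linarith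
    · rcases max_choice |a| |c| with h' | h' <;> rw [h'] <;> linarith
  have hR2q : R ^ (2 - q) ≤ 1 + |a| ^ q + |c| ^ q :=
    (Real.rpow_le_rpow_of_exponent_le hR (by linarith)).trans hRq
  have hq : 0 < q - 1 := sub_pos.2 hq1
  calc q * (q - 1) / 2 * (c - a) ^ 2 / (1 + |a| ^ q + |c| ^ q)
      ≤ q * (q - 1) / 2 * (c - a) ^ 2 / R ^ (2 - q) :=
        div_le_div_of_nonneg_left (by positivity) (by positivity) hR2q
    _ = q * (q - 1) * R ^ (q - 2) / 2 * (c - a) ^ 2 := by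
        rw [show q - 2 = -(2 - q) by ring, Real.rpow_neg (by positivity)]
        ring
    _ ≤ _ := le_abs_rpow_bregman_of_abs_le hq1 hq2
        ((le_max_left _ _).trans (le_max_right _ _)) ((le_max_right _ _).trans (le_max_right _ _))

theorem weighted_le_abs_rpow_bregman {wmin w D a c : ℝ} (hwmin : 0 < wmin) (hw : wmin ≤ w)
    (hD : wmin * (1 + |a| ^ q + |c| ^ q) ≤ D) :
    q * (q - 1) / 2 * wmin ^ 2 * (c - a) ^ 2 / D
      ≤ w * |c| ^ q - w * |a| ^ q - q * w * |a| ^ (q - 1) * Real.sign a * (c - a) := by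
  have hq : 0 < q - 1 := sub_pos.2 hq1
  have hS : 0 < 1 + |a| ^ q + |c| ^ q := by positivity
  have hB := le_abs_rpow_bregman hq1 hq2 a c
  have hB0 := (div_nonneg (by positivity) hS.le).trans hB
  have hw0 : 0 ≤ w := hwmin.le.trans hw
  calc q * (q - 1) / 2 * wmin ^ 2 * (c - a) ^ 2 / D
      ≤ q * (q - 1) / 2 * wmin ^ 2 * (c - a) ^ 2 / (wmin * (1 + |a| ^ q + |c| ^ q)) :=
        div_le_div_of_nonneg_left (by positivity) (by positivity) hD
    _ = wmin * (q * (q - 1) / 2 * (c - a) ^ 2 / (1 + |a| ^ q + |c| ^ q)) := by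
        field_simp
    _ ≤ w * (|c| ^ q - |a| ^ q - q * |a| ^ (q - 1) * Real.sign a * (c - a)) := by gcongr
    _ = _ := by ring

end AbsRpow

theorem HilbertBasis.hasSum_inner_sq {ι E : Type*} [NormedAddCommGroup E] [InnerProductSpace ℝ E]
    (b : HilbertBasis ι ℝ E) (x : E) : HasSum (fun i => ⟪b i, x⟫_ℝ ^ 2) (‖x‖ ^ 2) := by
  simpa only [real_inner_comm x, ← sq, real_inner_self_eq_norm_sq] using
    b.hasSum_inner_mul_inner x x

theorem bregman_lower_bound_general
    {U : Type*} [NormedAddCommGroup U] [InnerProductSpace ℝ U]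
    (b : HilbertBasis ℕ ℝ U)
    (q : ℝ) (hq1 : 1 < q) (hq2 : q ≤ 2)
    (w : ℕ → ℝ) (wmin : ℝ) (hwmin : 0 < wmin) (hw : ∀ i, wmin ≤ w i) :
    ∃ c : ℝ, 0 < c ∧ ∀ (u ut : U) (ξ : U),
      Summable (fun i => w i * |⟪b i, u⟫_ℝ| ^ q) →
      Summable (fun i => w i * |⟪b i, ut⟫_ℝ| ^ q) →
      Summable (fun i => (w i) ^ 2 * |⟪b i, u⟫_ℝ| ^ (2 * (q - 1))) →
      (∀ i, ⟪b i, ξ⟫_ℝ = q * w i * |⟪b i, u⟫_ℝ| ^ (q - 1) * Real.sign ⟪b i, u⟫_ℝ) →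
      c * ‖ut - u‖ ^ 2 /
          (3 * wmin + 2 * (∑' i, w i * |⟪b i, u⟫_ℝ| ^ q) + ∑' i, w i * |⟪b i, ut⟫_ℝ| ^ q)
        ≤ (∑' i, w i * |⟪b i, ut⟫_ℝ| ^ q) - (∑' i, w i * |⟪b i, u⟫_ℝ| ^ q)
          - ⟪ξ, ut - u⟫_ℝ := by
  have hq : 0 < q - 1 := sub_pos.2 hq1
  refine ⟨q * (q - 1) / 2 * wmin ^ 2, by positivity, fun u ut ξ hu hut _ hξ => ?_⟩
  have hterm : ∀ v : U, ∀ i, 0 ≤ w i * |⟪b i, v⟫_ℝ| ^ q := fun v i =>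
    mul_nonneg (hwmin.le.trans (hw i)) (by positivity)
  have hD : ∀ i, wmin * (1 + |⟪b i, u⟫_ℝ| ^ q + |⟪b i, ut⟫_ℝ| ^ q)
      ≤ 3 * wmin + 2 * (∑' i, w i * |⟪b i, u⟫_ℝ| ^ q) + ∑' i, w i * |⟪b i, ut⟫_ℝ| ^ q := by
    intro i
    have hui := hu.le_tsum i fun j _ => hterm u j
    have huti := hut.le_tsum i fun j _ => hterm ut j
    have := mul_le_mul_of_nonneg_right (hw i) (by positivity : 0 ≤ |⟪b i, u⟫_ℝ| ^ q)
    have := mul_le_mul_of_nonneg_right (hw i) (by positivity : 0 ≤ |⟪b i, ut⟫_ℝ| ^ q)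
    have : 0 ≤ ∑' i, w i * |⟪b i, u⟫_ℝ| ^ q := tsum_nonneg (hterm u)
    linarith
  refine hasSum_le (fun i => ?_) (((b.hasSum_inner_sq (ut - u)).mul_left _).div_const _)
    ((hut.hasSum.sub hu.hasSum).sub (b.hasSum_inner_mul_inner ξ (ut - u)))
  rw [real_inner_comm (b i) ξ, hξ i, inner_sub_right]
  exact weighted_le_abs_rpow_bregman hq1 hq2 hwmin (hw i) (hD i)

theorem bregman_lower_bound
    {U : Type*} [NormedAddCommGroup U] [InnerProductSpace ℝ U] [CompleteSpace U]
    (b : HilbertBasis ℕ ℝ U)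
    (q : ℝ) (hq1 : 1 < q) (hq2 : q ≤ 2)
    (w : ℕ → ℝ) (wmin : ℝ) (hwmin : 0 < wmin) (hw : ∀ i, wmin ≤ w i) :
    ∃ c : ℝ, 0 < c ∧ ∀ (u ut : U) (ξ : U),
      Summable (fun i => w i * |⟪b i, u⟫_ℝ| ^ q) →
      Summable (fun i => w i * |⟪b i, ut⟫_ℝ| ^ q) →
      Summable (fun i => (w i) ^ 2 * |⟪b i, u⟫_ℝ| ^ (2 * (q - 1))) →
      (∀ i, ⟪b i, ξ⟫_ℝ = q * w i * |⟪b i, u⟫_ℝ| ^ (q - 1) * Real.sign ⟪b i, u⟫_ℝ) →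
      c * ‖ut - u‖ ^ 2 /
          (3 * wmin + 2 * (∑' i, w i * |⟪b i, u⟫_ℝ| ^ q) + ∑' i, w i * |⟪b i, ut⟫_ℝ| ^ q)
        ≤ (∑' i, w i * |⟪b i, ut⟫_ℝ| ^ q) - (∑' i, w i * |⟪b i, u⟫_ℝ| ^ q)
          - ⟪ξ, ut - u⟫_ℝ :=
  bregman_lower_bound_general b q hq1 hq2 w wmin hwmin hw
end

section
/- Let $H, V$ be normed spaces, $F: H \to V$, and suppose there exist $\beta_1, \beta_2 > 0$, $r > 0$ and functionals such that $\mathcal{R}(u) - \mathcal{R}(u^\dagger) \ge \beta_1\|u - u^\dagger\|^r - \beta_2\|F(u) - F(u^\dagger)\|$ for the minimizer $u_\alpha^\delta$ of $u \mapsto \|F(u)-v^\delta\| + \alpha\mathcal{R}(u)$ (case $p = 1$), where $\|v^\delta - F(u^\dagger)\| \le \delta$ and $\alpha\beta_2 < 1$. Then $\|u_\alpha^\delta - u^\dagger\|^r \le \dfrac{(1+\alpha\beta_2)\delta}{\alpha\beta_1}$ and $\|F(u_\alpha^\delta) - v^\delta\| \le \dfrac{(1+\alpha\beta_2)\delta}{1-\alpha\beta_2}$.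 -/
theorem convergence_rates_p_one
    {H V : Type*} [NormedAddCommGroup H] [NormedAddCommGroup V]
    (F : H → V) (R : H → ℝ) (udag uad : H) (vδ : V)
    (α δ β₁ β₂ r : ℝ) (hα : 0 < α) (hδ : 0 ≤ δ)
    (hβ₁ : 0 < β₁) (hβ₂ : 0 < β₂) (hr : 0 < r)
    (hnoise : ‖vδ - F udag‖ ≤ δ)
    (hmin : ∀ u : H, ‖F uad - vδ‖ + α * R uad ≤ ‖F u - vδ‖ + α * R u)
    (hvar : β₁ * ‖uad - udag‖ ^ r - β₂ * ‖F uad - F udag‖ ≤ R uad - R udag)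
    (hsmall : α * β₂ < 1) :
    ‖uad - udag‖ ^ r ≤ (1 + α * β₂) * δ / (α * β₁) ∧
    ‖F uad - vδ‖ ≤ (1 + α * β₂) * δ / (1 - α * β₂) := by
  have h1 := hmin udag
  have htri : ‖F uad - F udag‖ ≤ ‖F uad - vδ‖ + δ := by
    calc ‖F uad - F udag‖ = ‖(F uad - vδ) + (vδ - F udag)‖ := by rw [sub_add_sub_cancel]
      _ ≤ ‖F uad - vδ‖ + ‖vδ - F udag‖ := norm_add_le _ _
      _ ≤ ‖F uad - vδ‖ + δ := by linarith
  have hnd : ‖F udag - vδ‖ ≤ δ := by rw [norm_sub_rev]; exact hnoise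
  have ht : 0 ≤ ‖uad - udag‖ ^ r := Real.rpow_nonneg (norm_nonneg _) _
  have hres : 0 ≤ ‖F uad - vδ‖ := norm_nonneg _
  -- key inequality
  have key : (1 - α * β₂) * ‖F uad - vδ‖ + α * β₁ * ‖uad - udag‖ ^ r ≤ (1 + α * β₂) * δ := by
    nlinarith [mul_le_mul_of_nonneg_left hvar hα.le, mul_le_mul_of_nonneg_left htri (mul_pos hα hβ₂).le]
  constructor
  · rw [le_div_iff₀ (mul_pos hα hβ₁)]
    nlinarith [mul_nonneg (mul_pos hα hβ₁).le ht]
  · rw [le_div_iff₀ (by linarith)]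
    nlinarith [mul_nonneg (mul_pos hα hβ₁).le ht]
end

section
/- Under the same setting with exponent $p > 1$ and conjugate exponent $p_*$ (with $1/p + 1/p_* = 1$): if $u_\alpha^\delta$ minimizes $u \mapsto \|F(u)-v^\delta\|^p + \alpha\mathcal{R}(u)$, $\|v^\delta - F(u^\dagger)\| \le \delta$, and $\mathcal{R}(u_\alpha^\delta) - \mathcal{R}(u^\dagger) \ge \beta_1\|u_\alpha^\delta - u^\dagger\|^r - \beta_2\|F(u_\alpha^\delta) - F(u^\dagger)\|$, then $\|u_\alpha^\delta - u^\dagger\|^r \le \dfrac{\delta^p + \alpha\beta_2\delta + (\alpha\beta_2)^{p_*}/p_*}{\alpha\beta_1}$ and $\|F(u_\alpha^\delta) - v^\delta\|^p \le p_*\delta^p + p_*\alpha\beta_2\delta + (\alpha\beta_2)^{p_*}$. -/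
theorem convergence_rates_p_gt_one
    {H V : Type*} [NormedAddCommGroup H] [NormedAddCommGroup V]
    (F : H → V) (R : H → ℝ) (udag uad : H) (vδ : V)
    (α δ β₁ β₂ r p : ℝ) (hα : 0 < α) (hδ : 0 ≤ δ)
    (hβ₁ : 0 < β₁) (hβ₂ : 0 < β₂) (hr : 0 < r) (hp : 1 < p)
    (hnoise : ‖vδ - F udag‖ ≤ δ)
    (hmin : ∀ u : H, ‖F uad - vδ‖ ^ p + α * R uad ≤ ‖F u - vδ‖ ^ p + α * R u)
    (hvar : β₁ * ‖uad - udag‖ ^ r - β₂ * ‖F uad - F udag‖ ≤ R uad - R udag) :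
    ‖uad - udag‖ ^ r ≤
        (δ ^ p + α * β₂ * δ + (α * β₂) ^ (p / (p - 1)) / (p / (p - 1))) / (α * β₁) ∧
    ‖F uad - vδ‖ ^ p ≤
        (p / (p - 1)) * δ ^ p + (p / (p - 1)) * (α * β₂) * δ + (α * β₂) ^ (p / (p - 1)) := by
  set q := p / (p - 1) with hq
  have hpq : p.HolderConjugate q := Real.HolderConjugate.conjExponent hp
  set t := ‖F uad - vδ‖ with ht
  have ht0 : 0 ≤ t := norm_nonneg _
  -- minimality at udag
  have h1 : ‖F udag - vδ‖ ≤ δ := by rw [norm_sub_rev]; exact hnoise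
  have h2 : ‖F udag - vδ‖ ^ p ≤ δ ^ p :=
    Real.rpow_le_rpow (norm_nonneg _) h1 (le_of_lt hpq.pos)
  have hmin' : t ^ p + α * R uad ≤ δ ^ p + α * R udag := by
    have := hmin udag; linarith
  -- triangle inequality
  have htri : ‖F uad - F udag‖ ≤ t + δ := by
    calc ‖F uad - F udag‖ = ‖(F uad - vδ) + (vδ - F udag)‖ := by abel_nf
    _ ≤ ‖F uad - vδ‖ + ‖vδ - F udag‖ := norm_add_le _ _
    _ ≤ t + δ := by linarith
  -- Young
  have hyoung : t * (α * β₂) ≤ t ^ p / p + (α * β₂) ^ q / q :=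
    Real.young_inequality_of_nonneg ht0 (by positivity) hpq
  -- combine
  have hE : 0 ≤ ‖uad - udag‖ ^ r := Real.rpow_nonneg (norm_nonneg _) r
  have hsplit : t ^ p / q + t ^ p / p = t ^ p := by
    have h := hpq.inv_add_inv_eq_one
    calc t ^ p / q + t ^ p / p = t ^ p * (p⁻¹ + q⁻¹) := by ring
    _ = t ^ p := by rw [h, mul_one]
  have hcomb : t ^ p / q + α * β₁ * ‖uad - udag‖ ^ r ≤
      δ ^ p + α * β₂ * δ + (α * β₂) ^ q / q := by
    nlinarith [hsplit, hmin', hyoung, mul_le_mul_of_nonneg_left htri (mul_nonneg hα.le hβ₂.le),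
      mul_le_mul_of_nonneg_left hvar hα.le]
  have hq0 : 0 < q := hpq.symm.pos
  have htp0 : 0 ≤ t ^ p := Real.rpow_nonneg ht0 p
  have hE' : 0 ≤ α * β₁ * ‖uad - udag‖ ^ r := by positivity
  constructor
  · rw [le_div_iff₀ (by positivity)]
    have h7 : 0 ≤ t ^ p / q := by positivity
    nlinarith
  · have h6 : t ^ p / q ≤ δ ^ p + α * β₂ * δ + (α * β₂) ^ q / q := by linarith
    have h5 : t ^ p ≤ (δ ^ p + α * β₂ * δ + (α * β₂) ^ q / q) * q :=
      (div_le_iff₀ hq0).mp h6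
    calc t ^ p ≤ (δ ^ p + α * β₂ * δ + (α * β₂) ^ q / q) * q := h5
    _ = q * δ ^ p + q * (α * β₂) * δ + (α * β₂) ^ q := by field_simp
end

section
/- Let $q = 1$, Hilbert space $U$ with orthonormal basis $(\phi_i)$, weights $w_i \ge w_{\min} > 0$, $\mathcal{R}_1(u) = \sum_i w_i|\langle\phi_i,u\rangle|$, $u^\dagger \in U$, and $\xi \in U$ satisfying $\langle\phi_i,\xi\rangle \in w_i \cdot \partial|\cdot|(\langle\phi_i,u^\dagger\rangle)$ for each $i$ (i.e. $\xi \in \partial\mathcal{R}_1(u^\dagger)$). Set $J = \{i : |\langle\phi_i,\xi\rangle| \ge w_{\min}\}$, suppose $\langle\phi_i, u^\dagger\rangle = 0$ for all $i \notin J$, and let $m = \sup_{i\notin J}|\langle\phi_i,\xi\rangle| < w_{\min}$. Then for all $u \in \operatorname{dom}(\mathcal{R}_1)$: $\left(\sum_{i\notin J}|\langle\phi_i,u\rangle|^2\right)^{1/2} \le \frac{1}{w_{\min}-m}\left(\mathcal{R}_1(u) - \mathcal{R}_1(u^\dagger) - \langle\xi, u - u^\dagger\rangle\right)$. -/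
open scoped InnerProductSpace

/-!
Since `ξ` is a subgradient of `R₁` at `u†`, the Bregman distance
`R₁(u) - R₁(u†) - ⟪ξ, u - u†⟫` splits along the basis into the nonnegative terms
`wᵢ |uᵢ| - wᵢ |u†ᵢ| - ξᵢ (uᵢ - u†ᵢ)`. Off `J` we have `u†ᵢ = 0` and `|ξᵢ| ≤ m < w_min ≤ wᵢ`, so
such a term is at least `(w_min - m) |uᵢ|`. Discarding the terms on `J` bounds
`(w_min - m) ∑_{i ∉ J} |uᵢ|`, and the `ℓ²` norm is dominated by the `ℓ¹` norm.
-/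

section Summation

variable {ι : Type*}

theorem rpow_half_tsum_sq_le_tsum {f : ι → ℝ} (hf0 : ∀ i, 0 ≤ f i) (hf : Summable f) :
    (∑' i, f i ^ 2) ^ ((1 : ℝ) / 2) ≤ ∑' i, f i := by
  set A := ∑' i, f i
  have hle : ∀ i, f i ^ 2 ≤ f i * A := fun i => by
    rw [sq]
    exact mul_le_mul_of_nonneg_left (hf.le_tsum i fun j _ => hf0 j) (hf0 i)
  have hsq : Summable fun i => f i ^ 2 :=
    .of_nonneg_of_le (fun i => sq_nonneg _) hle (hf.mul_right A)
  have hsum : ∑' i, f i ^ 2 ≤ A ^ 2 := by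
    calc ∑' i, f i ^ 2 ≤ ∑' i, f i * A := hsq.tsum_le_tsum hle (hf.mul_right A)
      _ = A ^ 2 := by rw [tsum_mul_right, sq]
  rw [← Real.sqrt_eq_rpow]
  exact (Real.sqrt_le_left (tsum_nonneg hf0)).2 hsum

theorem summable_of_const_mul_le {f t : ι → ℝ} {c : ℝ} (hc : 0 < c) (hf0 : ∀ i, 0 ≤ f i)
    (hft : ∀ i, c * f i ≤ t i) (ht : Summable t) : Summable f :=
  .of_nonneg_of_le hf0 (fun i => (le_inv_mul_iff₀ hc).2 (hft i)) (ht.mul_left c⁻¹)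

theorem tsum_le_inv_mul_tsum {f t : ι → ℝ} {c : ℝ} (hc : 0 < c) (hf : Summable f)
    (hft : ∀ i, c * f i ≤ t i) (ht : Summable t) : ∑' i, f i ≤ c⁻¹ * ∑' i, t i := by
  rw [le_inv_mul_iff₀ hc, ← tsum_mul_left]
  exact (hf.mul_left c).tsum_le_tsum hft ht

end Summation

section WeightedAbs

def weightedAbsBregman (w x d v : ℝ) : ℝ :=
  w * |v| - w * |d| - x * (v - d)

variable {w x d v : ℝ}

theorem mul_eq_mul_abs_of_eq_mul_sign (hxd : d ≠ 0 → x = w * Real.sign d) :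
    x * d = w * |d| := by
  rcases lt_trichotomy d 0 with hneg | rfl | hpos
  · rw [hxd hneg.ne, Real.sign_of_neg hneg, abs_of_neg hneg]; ring
  · simp
  · rw [hxd hpos.ne', Real.sign_of_pos hpos, abs_of_pos hpos]; ring

theorem weightedAbsBregman_nonneg (hxw : |x| ≤ w) (hxd : d ≠ 0 → x = w * Real.sign d) :
    0 ≤ weightedAbsBregman w x d v := by
  have hxv : x * v ≤ w * |v| :=
    calc x * v ≤ |x| * |v| := by rw [← abs_mul]; exact le_abs_self _
      _ ≤ w * |v| := mul_le_mul_of_nonneg_right hxw (abs_nonneg v)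
  have := mul_eq_mul_abs_of_eq_mul_sign hxd
  unfold weightedAbsBregman
  linarith

theorem sub_mul_abs_le_weightedAbsBregman_zero {c m : ℝ} (hcw : c ≤ w) (hxm : |x| ≤ m) :
    (c - m) * |v| ≤ weightedAbsBregman w x 0 v := by
  have hxv : x * v ≤ m * |v| :=
    calc x * v ≤ |x| * |v| := by rw [← abs_mul]; exact le_abs_self _
      _ ≤ m * |v| := mul_le_mul_of_nonneg_right hxm (abs_nonneg v)
  have := mul_le_mul_of_nonneg_right hcw (abs_nonneg v)
  simp only [weightedAbsBregman, abs_zero, mul_zero, sub_zero]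
  linarith

end WeightedAbs

theorem HilbertBasis.hasSum_weightedAbsBregman {ι U : Type*} [NormedAddCommGroup U]
    [InnerProductSpace ℝ U] (b : HilbertBasis ι ℝ U) (w : ι → ℝ) (ξ d v : U)
    (hv : Summable fun i => w i * |⟪b i, v⟫_ℝ|) (hd : Summable fun i => w i * |⟪b i, d⟫_ℝ|) :
    HasSum (fun i => weightedAbsBregman (w i) ⟪b i, ξ⟫_ℝ ⟪b i, d⟫_ℝ ⟪b i, v⟫_ℝ)
      ((∑' i, w i * |⟪b i, v⟫_ℝ|) - (∑' i, w i * |⟪b i, d⟫_ℝ|) - ⟪ξ, v - d⟫_ℝ) := by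
  have hξ : HasSum (fun i => ⟪b i, ξ⟫_ℝ * (⟪b i, v⟫_ℝ - ⟪b i, d⟫_ℝ)) ⟪ξ, v - d⟫_ℝ := by
    refine (b.hasSum_inner_mul_inner ξ (v - d)).congr_fun fun i => ?_
    rw [real_inner_comm, inner_sub_right]
  exact (hv.hasSum.sub hd.hasSum).sub hξ

theorem q_one_offsupport_estimate_general
    {U : Type*} [NormedAddCommGroup U] [InnerProductSpace ℝ U]
    (b : HilbertBasis ℕ ℝ U)
    (w : ℕ → ℝ) (wmin : ℝ) (hw : ∀ i, wmin ≤ w i)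
    (udag ξ : U)
    (hsub : ∀ i, |⟪b i, ξ⟫_ℝ| ≤ w i ∧
      (⟪b i, udag⟫_ℝ ≠ 0 → ⟪b i, ξ⟫_ℝ = w i * Real.sign ⟪b i, udag⟫_ℝ))
    (J : Set ℕ) (hJ : J = {i : ℕ | wmin ≤ |⟪b i, ξ⟫_ℝ|})
    (hsupp : ∀ i ∉ J, ⟪b i, udag⟫_ℝ = 0)
    (m : ℝ) (hm : m = ⨆ i : {i : ℕ // i ∉ J}, |⟪b i.1, ξ⟫_ℝ|) (hmlt : m < wmin)
    (u : U)
    (hu : Summable (fun i => w i * |⟪b i, u⟫_ℝ|))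
    (hudagsum : Summable (fun i => w i * |⟪b i, udag⟫_ℝ|)) :
    (∑' i : {i : ℕ // i ∉ J}, |⟪b i.1, u⟫_ℝ| ^ 2) ^ ((1 : ℝ) / 2)
      ≤ (wmin - m)⁻¹ *
        ((∑' i, w i * |⟪b i, u⟫_ℝ|) - (∑' i, w i * |⟪b i, udag⟫_ℝ|)
          - ⟪ξ, u - udag⟫_ℝ) := by
  have hgap : 0 < wmin - m := sub_pos.2 hmlt
  have hξm : ∀ i ∉ J, |⟪b i, ξ⟫_ℝ| ≤ m := fun i hi => by
    have hbdd : BddAbove (Set.range fun j : {j : ℕ // j ∉ J} => |⟪b j.1, ξ⟫_ℝ|) := by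
      refine ⟨wmin, ?_⟩
      rintro _ ⟨j, rfl⟩
      exact le_of_lt (by simpa [hJ] using j.2)
    exact hm ▸ le_ciSup hbdd ⟨i, hi⟩
  set t := fun i => weightedAbsBregman (w i) ⟪b i, ξ⟫_ℝ ⟪b i, udag⟫_ℝ ⟪b i, u⟫_ℝ
  have ht := b.hasSum_weightedAbsBregman w ξ udag u hu hudagsum
  have ht0 : ∀ i, 0 ≤ t i := fun i => weightedAbsBregman_nonneg (hsub i).1 (hsub i).2
  have hoff : ∀ i : {i : ℕ // i ∉ J}, (wmin - m) * |⟪b i.1, u⟫_ℝ| ≤ t i := fun i => by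
    simpa only [t, hsupp i i.2] using sub_mul_abs_le_weightedAbsBregman_zero (hw i) (hξm i i.2)
  have htJ : Summable fun i : {i : ℕ // i ∉ J} => t i := ht.summable.subtype {i | i ∉ J}
  have huJ : Summable fun i : {i : ℕ // i ∉ J} => |⟪b i.1, u⟫_ℝ| :=
    summable_of_const_mul_le hgap (fun _ => abs_nonneg _) hoff htJ
  rw [← ht.tsum_eq]
  calc _ ≤ ∑' i : {i : ℕ // i ∉ J}, |⟪b i.1, u⟫_ℝ| :=
        rpow_half_tsum_sq_le_tsum (fun _ => abs_nonneg _) huJ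
    _ ≤ (wmin - m)⁻¹ * ∑' i : {i : ℕ // i ∉ J}, t i :=
        tsum_le_inv_mul_tsum hgap huJ hoff htJ
    _ ≤ (wmin - m)⁻¹ * ∑' i, t i := by
        gcongr
        exact ht.summable.tsum_subtype_le t {i | i ∉ J} ht0

theorem q_one_offsupport_estimate
    {U : Type*} [NormedAddCommGroup U] [InnerProductSpace ℝ U] [CompleteSpace U]
    (b : HilbertBasis ℕ ℝ U)
    (w : ℕ → ℝ) (wmin : ℝ) (hwmin : 0 < wmin) (hw : ∀ i, wmin ≤ w i)
    (udag ξ : U)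
    (hsub : ∀ i, |⟪b i, ξ⟫_ℝ| ≤ w i ∧
      (⟪b i, udag⟫_ℝ ≠ 0 → ⟪b i, ξ⟫_ℝ = w i * Real.sign ⟪b i, udag⟫_ℝ))
    (J : Set ℕ) (hJ : J = {i : ℕ | wmin ≤ |⟪b i, ξ⟫_ℝ|})
    (hsupp : ∀ i ∉ J, ⟪b i, udag⟫_ℝ = 0)
    (m : ℝ) (hm : m = ⨆ i : {i : ℕ // i ∉ J}, |⟪b i.1, ξ⟫_ℝ|) (hmlt : m < wmin)
    (u : U)
    (hu : Summable (fun i => w i * |⟪b i, u⟫_ℝ|))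
    (hudagsum : Summable (fun i => w i * |⟪b i, udag⟫_ℝ|)) :
    (∑' i : {i : ℕ // i ∉ J}, |⟪b i.1, u⟫_ℝ| ^ 2) ^ ((1 : ℝ) / 2)
      ≤ (wmin - m)⁻¹ *
        ((∑' i, w i * |⟪b i, u⟫_ℝ|) - (∑' i, w i * |⟪b i, udag⟫_ℝ|)
          - ⟪ξ, u - udag⟫_ℝ) :=
  q_one_offsupport_estimate_general b w wmin hw udag ξ hsub J hJ hsupp m hm hmlt u hu hudagsum
end

section
/- Let $U, V$ be Hilbert spaces, $F: U \to V$ bounded linear, $u^\dagger \in U$, and $\mathcal{R}: U \to \mathbb{R}\cup\{\infty\}$ convex. Suppose there exists $\gamma_2 > 0$ such that $\mathcal{R}(u) - \mathcal{R}(u^\dagger) \ge -\gamma_2\|F(u - u^\dagger)\|$ for all $u \in U$. Then there exists $\omega \in \partial\mathcal{R}(u^\dagger)$ with $\omega \in \operatorname{range}(F^*)$ (closure not required when the subdifferential sum rule applies); i.e. the source condition $\partial\mathcal{R}(u^\dagger) \cap \operatorname{range}(F^*) \ne \emptyset$ holds. Conversely, if $\omega = F^*\eta \in \partial\mathcal{R}(u^\dagger)$,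 then $\mathcal{R}(u) - \mathcal{R}(u^\dagger) \ge \langle\omega, u-u^\dagger\rangle \ge -\|\eta\|\|F(u-u^\dagger)\|$ for all $u$. -/
/-!
The open convex cone `{(w, r) | r < -γ‖w‖}` in `V × ℝ` is disjoint from the image
`{(F v, r) | R (u† + v) - R u† ≤ r}` of the epigraph, by the variational inequality. A separating
functional must have positive `ℝ`-component and separate through the origin, since the cone
contains `(0, -ε)` and the image contains `(0, 0)`; normalised, it yields `ℓ` with
`ℓ (F v) ≤ R (u† + v) - R u†`, and the Riesz representative `η` of `ℓ` gives `F* η ∈ ∂R(u†)`.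
The converse is Cauchy–Schwarz.
-/

open scoped InnerProductSpace

open Set

section

variable {E V : Type*} [AddCommGroup E] [Module ℝ E] [NormedAddCommGroup V] [NormedSpace ℝ V]

theorem convex_lt_neg_mul_norm {γ : ℝ} (hγ : 0 ≤ γ) :
    Convex ℝ {p : V × ℝ | p.2 < -γ * ‖p.1‖} := by
  have hconc : ConcaveOn ℝ univ fun w : V => -γ * ‖w‖ := by
    rw [show (fun w : V => -γ * ‖w‖) = -fun w => γ • ‖w‖ by ext; simp]
    exact ((convexOn_norm convex_univ).smul hγ).neg
  simpa using hconc.convex_strict_hypograph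

theorem exists_strongDual_le_of_neg_mul_norm_le {φ : E → ℝ} (hφ : ConvexOn ℝ univ φ)
    (hφ0 : φ 0 ≤ 0) {γ : ℝ} (hγ : 0 ≤ γ) (A : E →ₗ[ℝ] V) (h : ∀ v, -γ * ‖A v‖ ≤ φ v) :
    ∃ ℓ : StrongDual ℝ V, ∀ v, ℓ (A v) ≤ φ v := by
  set K := {p : V × ℝ | p.2 < -γ * ‖p.1‖}
  have hK : IsOpen K := isOpen_lt continuous_snd (by fun_prop)
  have hdisj : Disjoint K (A.prodMap LinearMap.id '' {p : E × ℝ | p.1 ∈ univ ∧ φ p.1 ≤ p.2}) := by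
    rw [Set.disjoint_left]
    rintro _ hlt ⟨⟨v, r⟩, ⟨-, hle⟩, rfl⟩
    exact (h v).not_gt (hle.trans_lt hlt)
  obtain ⟨f, c, hfK, hfC⟩ := geometric_hahn_banach_open (convex_lt_neg_mul_norm hγ) hK
    (hφ.convex_epigraph.linear_image _) hdisj
  set a := f (0, 1)
  have hf : ∀ w r, f (w, r) = f (w, 0) + r * a := fun w r => by
    rw [show (w, r) = (w, 0) + r • ((0 : V), (1 : ℝ)) by simp, map_add, map_smul, smul_eq_mul]
  have hc : c ≤ 0 := by
    simpa using hfC 0 ⟨0, ⟨trivial, hφ0⟩, map_zero _⟩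
  have hcK : ∀ ε > 0, -(ε * a) < c := fun ε hε => by
    have := hfK (0, -ε) (by simpa [K] using hε)
    rwa [hf, Prod.mk_zero_zero, map_zero, zero_add, neg_mul] at this
  have ha : 0 < a := by linarith [hcK 1 one_pos]
  have hc0 : 0 ≤ c := by
    by_contra! hneg
    have := hcK (-c / a) (div_pos (neg_pos.2 hneg) ha)
    rw [div_mul_cancel₀ _ ha.ne'] at this
    linarith
  refine ⟨-a⁻¹ • f.comp (ContinuousLinearMap.inl ℝ V ℝ), fun v => ?_⟩
  have hv : 0 ≤ f (A v, 0) + φ v * a := by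
    rw [← hf]
    exact hc0.trans (hfC _ ⟨(v, φ v), ⟨trivial, le_rfl⟩, rfl⟩)
  simp only [FunLike.coe_smul, Pi.smul_apply, ContinuousLinearMap.comp_apply,
    ContinuousLinearMap.inl_apply, smul_eq_mul, neg_mul, neg_le]
  rw [le_inv_mul_iff₀ ha]
  linarith

end

theorem neg_norm_mul_norm_le_inner_adjoint {U V : Type*} [NormedAddCommGroup U]
    [InnerProductSpace ℝ U] [CompleteSpace U] [NormedAddCommGroup V] [InnerProductSpace ℝ V]
    [CompleteSpace V] (F : U →L[ℝ] V) (η : V) (x : U) :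
    -(‖η‖ * ‖F x‖) ≤ ⟪ContinuousLinearMap.adjoint F η, x⟫_ℝ := by
  rw [ContinuousLinearMap.adjoint_inner_left]
  exact neg_le_of_abs_le (abs_real_inner_le_norm η (F x))

theorem variational_iff_source
    {U V : Type*} [NormedAddCommGroup U] [InnerProductSpace ℝ U] [CompleteSpace U]
    [NormedAddCommGroup V] [InnerProductSpace ℝ V] [CompleteSpace V]
    (F : U →L[ℝ] V) (R : U → ℝ) (hR : ConvexOn ℝ Set.univ R) (udag : U) :
    ((∃ γ₂ > (0 : ℝ), ∀ u : U, R u - R udag ≥ -γ₂ * ‖F (u - udag)‖) →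
      ∃ η : V, ∀ u : U,
        R udag + ⟪ContinuousLinearMap.adjoint F η, u - udag⟫_ℝ ≤ R u) ∧
    (∀ η : V, (∀ u : U, R udag + ⟪ContinuousLinearMap.adjoint F η, u - udag⟫_ℝ ≤ R u) →
      ∀ u : U, R u - R udag ≥ -‖η‖ * ‖F (u - udag)‖) := by
  constructor
  · rintro ⟨γ, hγ, hvar⟩
    have hφ : ConvexOn ℝ univ fun v => R (udag + v) - R udag :=
      (hR.translate_right udag).add_const (-R udag)
    obtain ⟨ℓ, hℓ⟩ := exists_strongDual_le_of_neg_mul_norm_le hφ (by simp) hγ.le F.toLinearMap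
      fun v => by simpa using hvar (udag + v)
    refine ⟨(InnerProductSpace.toDual ℝ V).symm ℓ, fun u => ?_⟩
    rw [ContinuousLinearMap.adjoint_inner_left, InnerProductSpace.toDual_symm_apply]
    have := hℓ (u - udag)
    rw [add_sub_cancel, ContinuousLinearMap.coe_coe] at this
    linarith
  · intro η hη u
    linarith [hη u, neg_norm_mul_norm_le_inner_adjoint F η (u - udag)]
end
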